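/- arXiv:1612.08881 — 3 statements merged into one kernel-verified Lean document; each statement's English description precedes it below -/
import Mathlib

section
/- For the cubic Gauss sum S(B/Q) = (1/Q) Σ_{r=0}^{Q-1} e(-2πi B r³/Q) with gcd(B,Q)=1, there exist constants C > 0 and δ > 0 such that |S(B/Q)| ≤ C·Q^(-δ) for all Q ≥ 1. -/
/-!
Weyl differencing: for `T = ∑ₓ e(c x³ / Q)` with `c` a unit mod `Q`,
`|T|² ≤ ∑ₕ |∑ᵧ e(c ((y + h)³ - y³) / Q)|`, and each inner sum is a quadratic sum in `y` with
leading coefficient `3ch`. Differencing once more, a quadratic sum with leading coefficient `a`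
has square at most `Q · #{u : 2au = 0}`, which for `a = 3ch` is `Q · gcd(6h, Q) ≤ 6Q · gcd(h, Q)`.
Cauchy–Schwarz over `h` and `∑_{h < Q} gcd(h, Q) ≤ Q τ(Q) ≤ 2Q^{3/2}` give `|T|⁴ ≤ 12 Q^{7/2}`,
that is `|T / Q| ≤ 2 Q^{-1/8}`.
-/

open Finset

namespace AddChar

variable {G : Type*} [AddCommGroup G] [Fintype G]

theorem norm_sum_sq_le_sum_norm_sum_sub (ψ : AddChar G ℂ) (f : G → G) :
    ‖∑ x, ψ (f x)‖ ^ 2 ≤ ∑ h, ‖∑ y, ψ (f (y + h) - f y)‖ := by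
  set T := ∑ x, ψ (f x)
  have hT : T * starRingEnd ℂ T = ∑ h, ∑ y, ψ (f (y + h) - f y) := by
    rw [map_sum, sum_mul_sum, sum_comm]
    conv_rhs => rw [sum_comm]
    refine sum_congr rfl fun y _ => (Fintype.sum_equiv (Equiv.addLeft y) _ _ fun h => ?_).symm
    rw [sub_eq_add_neg, map_add_eq_mul, map_neg_eq_conj, Equiv.coe_addLeft]
  calc ‖T‖ ^ 2 = ‖T * starRingEnd ℂ T‖ := by rw [norm_mul, RCLike.norm_conj, sq]
    _ ≤ _ := hT ▸ norm_sum_le _ _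

variable {R : Type*} [CommRing R] [Fintype R] [DecidableEq R] {ψ : AddChar R ℂ}

theorem IsPrimitive.norm_sum_quadratic_sq_le (hψ : ψ.IsPrimitive) (a b e : R) :
    ‖∑ y, ψ (a * y ^ 2 + b * y + e)‖ ^ 2 ≤ Fintype.card R * #{u | 2 * a * u = 0} := by
  refine (norm_sum_sq_le_sum_norm_sum_sub ψ _).trans_eq ?_
  have hdiff : ∀ h, ‖∑ y, ψ ((a * (y + h) ^ 2 + b * (y + h) + e) - (a * y ^ 2 + b * y + e))‖
      = if 2 * a * h = 0 then (Fintype.card R : ℝ) else 0 := by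
    intro h
    have hlin : ∑ y, ψ ((a * (y + h) ^ 2 + b * (y + h) + e) - (a * y ^ 2 + b * y + e))
        = ψ (a * h ^ 2 + b * h) * ∑ y, ψ (y * (2 * a * h)) := by
      rw [mul_sum]
      refine sum_congr rfl fun y _ => ?_
      rw [← map_add_eq_mul]
      ring_nf
    rw [hlin, sum_mulShift _ hψ, norm_mul, norm_apply, one_mul]
    split_ifs <;> simp
  simp_rw [hdiff]
  rw [← sum_filter, sum_const, nsmul_eq_mul, mul_comm]

theorem IsPrimitive.norm_sum_cubic_pow_four_le (hψ : ψ.IsPrimitive) (c : R) :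
    ‖∑ x, ψ (c * x ^ 3)‖ ^ 4 ≤ (Fintype.card R : ℝ) ^ 2 * ∑ h, (#{u | 6 * c * h * u = 0} : ℝ) := by
  set n : ℝ := (Fintype.card R : ℝ)
  have hdiff : ∀ h, ‖∑ y, ψ (c * (y + h) ^ 3 - c * y ^ 3)‖ ^ 2 ≤ n * #{u | 6 * c * h * u = 0} := by
    intro h
    have hquad := hψ.norm_sum_quadratic_sq_le (3 * c * h) (3 * c * h ^ 2) (c * h ^ 3)
    rw [show 2 * (3 * c * h) = 6 * c * h by ring] at hquad
    convert hquad using 5 with y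
    ring
  calc ‖∑ x, ψ (c * x ^ 3)‖ ^ 4 = (‖∑ x, ψ (c * x ^ 3)‖ ^ 2) ^ 2 := by ring
    _ ≤ (∑ h, ‖∑ y, ψ (c * (y + h) ^ 3 - c * y ^ 3)‖) ^ 2 := by
      gcongr
      exact norm_sum_sq_le_sum_norm_sum_sub ψ _
    _ ≤ n * ∑ h, ‖∑ y, ψ (c * (y + h) ^ 3 - c * y ^ 3)‖ ^ 2 := sq_sum_le_card_mul_sum_sq
    _ ≤ n * ∑ h, n * (#{u | 6 * c * h * u = 0} : ℝ) := by gcongr with h; exact hdiff h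
    _ = n ^ 2 * ∑ h, (#{u | 6 * c * h * u = 0} : ℝ) := by rw [← mul_sum]; ring

end AddChar

theorem Nat.card_divisors_le_two_mul_sqrt (n : ℕ) : #n.divisors ≤ 2 * n.sqrt := by
  rcases n.eq_zero_or_pos with rfl | hn
  · simp
  set s := n.sqrt
  have hsmall : #{d ∈ n.divisors | d ≤ s} ≤ s := by
    refine (card_le_card fun d hd => ?_).trans (Nat.card_Icc 1 s).le
    rw [mem_filter, Nat.mem_divisors] at hd
    exact mem_Icc.mpr ⟨Nat.pos_of_dvd_of_pos hd.1.1 hn, hd.2⟩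
  have hlarge : #{d ∈ n.divisors | ¬d ≤ s} ≤ s := by
    refine (card_le_card_of_injOn (fun d => n / d) (fun d hd => ?_) fun d hd e he hde => ?_).trans
      (Nat.card_Icc 1 s).le
    · rw [coe_filter, Set.mem_ofPred_eq, Nat.mem_divisors, not_le] at hd
      have hd0 : 0 < d := Nat.pos_of_dvd_of_pos hd.1.1 hn
      refine mem_Icc.mpr ⟨Nat.div_pos (Nat.le_of_dvd hn hd.1.1) hd0, Nat.lt_succ_iff.mp ?_⟩
      rw [Nat.div_lt_iff_lt_mul hd0]
      calc n < (s + 1) * (s + 1) := Nat.lt_succ_sqrt n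
        _ ≤ (s + 1) * d := Nat.mul_le_mul_left _ hd.2
    · rw [coe_filter, Set.mem_ofPred_eq, Nat.mem_divisors] at hd he
      rw [← Nat.div_div_self hd.1.1 hn.ne', ← Nat.div_div_self he.1.1 hn.ne']
      exact congrArg (n / ·) hde
  rw [← card_filter_add_card_filter_not (· ≤ s)]
  omega

theorem Nat.sum_range_gcd_le (n : ℕ) : ∑ r ∈ range n, n.gcd r ≤ n * #n.divisors := by
  rcases n.eq_zero_or_pos with rfl | hn
  · simp
  rw [← sum_fiberwise_of_maps_to (t := n.divisors) (g := n.gcd)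
    fun r _ => Nat.mem_divisors.mpr ⟨Nat.gcd_dvd_left n r, hn.ne'⟩]
  calc ∑ d ∈ n.divisors, ∑ r ∈ range n with n.gcd r = d, n.gcd r
      = ∑ d ∈ n.divisors, d * (n / d).totient := by
        refine sum_congr rfl fun d hd => ?_
        rw [sum_congr rfl fun r hr => (mem_filter.mp hr).2, sum_const, smul_eq_mul, mul_comm,
          Nat.totient_div_of_dvd (Nat.dvd_of_mem_divisors hd)]
    _ ≤ ∑ d ∈ n.divisors, d * (n / d) := by gcongr; exact Nat.totient_le _
    _ = n * #n.divisors := by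
        rw [mul_comm, ← smul_eq_mul, ← sum_const]
        exact sum_congr rfl fun d hd => Nat.mul_div_cancel' (Nat.dvd_of_mem_divisors hd)

namespace ZMod

theorem card_filter_natCast_mul_eq_zero (n m : ℕ) [NeZero n] :
    #{u : ZMod n | (m : ZMod n) * u = 0} = n.gcd m := by
  have hker := IsAddCyclic.card_nsmulAddMonoidHom_ker (ZMod n) m
  rw [Nat.card_zmod, Nat.card_eq_fintype_card, Fintype.card_subtype] at hker
  rw [← hker]
  congr 1
  ext u
  simp [nsmul_eq_mul]

theorem sum_range_natCast {M : Type*} [AddCommMonoid M] (n : ℕ) [NeZero n] (f : ZMod n → M) :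
    ∑ r ∈ range n, f r = ∑ x, f x :=
  sum_nbij' (↑) ZMod.val (fun _ _ => mem_univ _) (fun x _ => mem_range.mpr x.val_lt)
    (fun _ hr => ZMod.val_cast_of_lt (mem_range.mp hr)) (fun x _ => ZMod.natCast_zmod_val x)
    fun _ _ => rfl

theorem sum_card_filter_mul_eq_zero_le {n : ℕ} [NeZero n] {m : ℕ} (hm : 0 < m) {c : ZMod n}
    (hc : IsUnit c) :
    ∑ h : ZMod n, #{u | (m : ZMod n) * c * h * u = 0} ≤ m * (n * #n.divisors) := by
  rw [← sum_range_natCast]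
  calc ∑ r ∈ range n, #{u | (m : ZMod n) * c * r * u = 0}
      = ∑ r ∈ range n, n.gcd (m * r) := by
        refine sum_congr rfl fun r _ => ?_
        rw [← card_filter_natCast_mul_eq_zero]
        congr 1
        ext u
        simp only [mem_filter, mem_univ, true_and, Nat.cast_mul]
        rw [show (m : ZMod n) * c * r * u = c * (m * r * u) by ring, hc.mul_right_eq_zero]
    _ ≤ ∑ r ∈ range n, m * n.gcd r := by
        refine sum_le_sum fun r _ =>
          Nat.le_of_dvd (Nat.mul_pos hm (Nat.gcd_pos_of_pos_left r n.pos_of_neZero)) ?_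
        rw [← Nat.gcd_mul_left]
        exact Nat.dvd_gcd ((Nat.gcd_dvd_left _ _).trans (dvd_mul_left _ _)) (Nat.gcd_dvd_right _ _)
    _ ≤ m * (n * #n.divisors) := by rw [← mul_sum]; gcongr; exact Nat.sum_range_gcd_le n

theorem norm_sum_stdAddChar_cubic_pow_four_le {n : ℕ} [NeZero n] {c : ZMod n} (hc : IsUnit c) :
    ‖∑ x, stdAddChar (c * x ^ 3)‖ ^ 4 ≤ 12 * (n : ℝ) ^ 3 * √n := by
  have hcount := sum_card_filter_mul_eq_zero_le (m := 6) (by norm_num) hc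
  simp only [Nat.cast_ofNat] at hcount
  have hdiv : (#n.divisors : ℝ) ≤ 2 * √n :=
    (Nat.cast_le.mpr (Nat.card_divisors_le_two_mul_sqrt n)).trans (by
      push_cast; gcongr; exact Real.nat_sqrt_le_real_sqrt)
  refine ((isPrimitive_stdAddChar n).norm_sum_cubic_pow_four_le c).trans ?_
  calc (Fintype.card (ZMod n) : ℝ) ^ 2 * ∑ h, (#{u | 6 * c * h * u = 0} : ℝ)
      = (n : ℝ) ^ 2 * ((∑ h, #{u | 6 * c * h * u = 0} : ℕ) : ℝ) := by
        rw [ZMod.card, Nat.cast_sum]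
    _ ≤ (n : ℝ) ^ 2 * ((6 * (n * #n.divisors) : ℕ) : ℝ) := by gcongr
    _ ≤ (n : ℝ) ^ 2 * (6 * (n * (2 * √n))) := by push_cast; gcongr
    _ = 12 * (n : ℝ) ^ 3 * √n := by ring

end ZMod

theorem div_le_two_mul_rpow_of_pow_four_le {A x : ℝ} (hx : 0 < x)
    (h : A ^ 4 ≤ 16 * x ^ 3 * √x) : A / x ≤ 2 * x ^ (-(1 / 8 : ℝ)) := by
  obtain ⟨y, hy, rfl⟩ : ∃ y > 0, x = y ^ 8 := ⟨x ^ (1 / 8 : ℝ), by positivity, by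
    rw [← Real.rpow_natCast, ← Real.rpow_mul hx.le]; norm_num⟩
  have hroot : (y ^ 8) ^ (-(1 / 8 : ℝ)) = y⁻¹ := by
    rw [← Real.rpow_natCast, ← Real.rpow_mul hy.le]; norm_num [Real.rpow_neg_one]
  rw [show y ^ 8 = (y ^ 4) ^ 2 by ring, Real.sqrt_sq (by positivity)] at h
  have hA' : A ≤ 2 * y ^ 7 :=
    le_of_pow_le_pow_left₀ four_ne_zero (by positivity) (by linarith)
  rw [hroot, div_le_iff₀ (by positivity)]
  calc A ≤ 2 * y ^ 7 := hA'
    _ = 2 * y⁻¹ * y ^ 8 := by field_simp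

/-- Gauss sum bound: `|S(B/Q)| ≤ C·Q^(-δ)` for the normalized cubic Gauss sum,
with `gcd(B,Q) = 1`. -/
theorem stmt_1 :
    ∃ C > (0 : ℝ), ∃ δ > (0 : ℝ), ∀ Q : ℕ, 1 ≤ Q → ∀ B : ℤ, Int.gcd B (Q : ℤ) = 1 →
      ‖(1 / (Q : ℂ)) * ∑ r ∈ Finset.range Q,
          Complex.exp (-(2 * (Real.pi : ℂ) * Complex.I) * (B : ℂ) * (r : ℂ) ^ 3 / (Q : ℂ))‖
        ≤ C * (Q : ℝ) ^ (-δ) := by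
  refine ⟨2, two_pos, 1 / 8, by norm_num, fun Q hQ B hB => ?_⟩
  have : NeZero Q := ⟨by omega⟩
  have hc : IsUnit ((-B : ℤ) : ZMod Q) :=
    ZMod.coe_unitOfIsCoprime (-B) (Int.isCoprime_iff_gcd_eq_one.mpr hB).neg_left ▸ Units.isUnit _
  have hsum : ∑ r ∈ range Q,
      Complex.exp (-(2 * (Real.pi : ℂ) * Complex.I) * (B : ℂ) * (r : ℂ) ^ 3 / (Q : ℂ))
        = ∑ x, ZMod.stdAddChar (((-B : ℤ) : ZMod Q) * x ^ 3) := by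
    rw [← ZMod.sum_range_natCast]
    refine sum_congr rfl fun r _ => ?_
    rw [show ((-B : ℤ) : ZMod Q) * (r : ZMod Q) ^ 3 = ((-B * r ^ 3 : ℤ) : ZMod Q) by
      push_cast; ring, ZMod.stdAddChar_coe]
    congr 1
    push_cast
    ring
  rw [hsum, norm_mul, one_div, norm_inv, Complex.norm_natCast, inv_mul_eq_div]
  refine div_le_two_mul_rpow_of_pow_four_le (by exact_mod_cast hQ) ?_
  exact (ZMod.norm_sum_stdAddChar_cubic_pow_four_le hc).trans (by gcongr; norm_num)
end

section
/- Let K : ℤ → ℂ be supported in [-N, N] and let T_K f(x) = Σ_n K(n) f(x-n). Then for any finitely supported f, g : ℤ → ℂ, |⟨T_K f, g⟩| ≤ C · N^(1/r + 1/s - 1) · ‖T_K‖_{ℓ^r → ℓ^{s'}} · Λ(f,g), where Λ(f,g) = Σ_{I} |3I| ⟨f⟩_{3I,r} ⟨g⟩_{3I,s} is a sparse form over a sparse collection of intervals (here 1 ≤ r, s < ∞, s' is the conjugate exponent of s, and C is an absolute constant). -/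
/-- The interval of integers encoded by a pair `(a, n)`, namely `ℤ ∩ [a, a+n]`,
which has cardinality `n+1`. -/
noncomputable def intIcc (p : ℤ × ℕ) : Finset ℤ := Finset.Icc p.1 (p.1 + p.2)

/-- The `r`-average `⟨f⟩_{I,r}` of `f` over the interval encoded by `p`. -/
noncomputable def intAvg (p : ℤ × ℕ) (r : ℝ) (f : ℤ →₀ ℂ) : ℝ :=
  (((p.2 : ℝ) + 1)⁻¹ * ∑ x ∈ intIcc p, ‖f x‖ ^ r) ^ (1 / r)

/-- A collection `𝒮` of intervals is sparse, as witnessed by sets `E`. -/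
def IsSparse (𝒮 : Finset (ℤ × ℕ)) (E : ℤ × ℕ → Finset ℤ) : Prop :=
  (∀ p ∈ 𝒮, E p ⊆ intIcc p) ∧
  (∀ p ∈ 𝒮, ((p.2 : ℝ) + 1) < 4 * (E p).card) ∧
  ((𝒮 : Set (ℤ × ℕ)).Pairwise fun p q => Disjoint (E p) (E q))

/-- The sparse form `Λ_{𝒮,r,s}(f,g) = Σ_{S∈𝒮} |S| ⟨f⟩_{S,r} ⟨g⟩_{S,s}`. -/
noncomputable def sparseForm (𝒮 : Finset (ℤ × ℕ)) (r s : ℝ) (f g : ℤ →₀ ℂ) : ℝ :=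
  ∑ p ∈ 𝒮, ((p.2 : ℝ) + 1) * intAvg p r f * intAvg p s g

/-!
Cut `ℤ` into the blocks `Q_j = [jN, jN + N)`. Since `K` vanishes off `[-N, N]`, the pairing
`⟨T_K f, g⟩` splits as `Σ_j ⟨T_K (f 1_{3Q_j}), g 1_{Q_j}⟩`, and the `ℓ^r → ℓ^{s'}` bound on each
piece gives `A ‖f 1_{3Q_j}‖_r ‖g 1_{Q_j}‖_s ≤ A (3N)^{1/r+1/s} ⟨f⟩_{3Q_j,r} ⟨g⟩_{3Q_j,s}`.
The intervals `3Q_j` form a sparse family, the pairwise disjoint `Q_j` filling a third of each,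
and summing gives the bound with the factor `3^{1/r+1/s-1} ≤ 3`.
-/

noncomputable def convPairing (K : ℤ → ℂ) (f g : ℤ →₀ ℂ) : ℂ :=
  ∑ x ∈ g.support, (∑ n ∈ f.support, K (x - n) * f n) * (starRingEnd ℂ) (g x)

noncomputable def intLpNorm (r : ℝ) (f : ℤ →₀ ℂ) : ℝ :=
  (∑ n ∈ f.support, ‖f n‖ ^ r) ^ (1 / r)

lemma intAvg_nonneg (p : ℤ × ℕ) (r : ℝ) (f : ℤ →₀ ℂ) : 0 ≤ intAvg p r f := by
  unfold intAvg
  positivity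

lemma sparseForm_nonneg (𝒮 : Finset (ℤ × ℕ)) (r s : ℝ) (f g : ℤ →₀ ℂ) :
    0 ≤ sparseForm 𝒮 r s f g :=
  Finset.sum_nonneg fun p _ => by
    have := intAvg_nonneg p r f
    have := intAvg_nonneg p s g
    positivity

lemma intLpNorm_nonneg (r : ℝ) (f : ℤ →₀ ℂ) : 0 ≤ intLpNorm r f := by
  unfold intLpNorm
  positivity

lemma convPairing_filter_left (K : ℤ → ℂ) (f g : ℤ →₀ ℂ) (p : ℤ → Prop) [DecidablePred p]
    (hK : ∀ x ∈ g.support, ∀ n, ¬p n → K (x - n) = 0) :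
    convPairing K (f.filter p) g = convPairing K f g := by
  refine Finset.sum_congr rfl fun x hx => congrArg (· * _) ?_
  rw [Finsupp.support_filter, Finset.sum_filter]
  refine Finset.sum_congr rfl fun n _ => ?_
  by_cases hn : p n
  · rw [if_pos hn, Finsupp.filter_apply_pos _ _ hn]
  · rw [if_neg hn, hK x hx n hn, zero_mul]

lemma convPairing_eq_sum_fiberwise {ι : Type*} [DecidableEq ι] (K : ℤ → ℂ) (f g : ℤ →₀ ℂ)
    (φ : ℤ → ι) :
    convPairing K f g = ∑ j ∈ g.support.image φ, convPairing K f (g.filter (φ · = j)) := by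
  rw [convPairing, ← Finset.sum_fiberwise_of_maps_to fun x hx => Finset.mem_image_of_mem φ hx]
  refine Finset.sum_congr rfl fun j _ => Finset.sum_congr rfl fun x hx => ?_
  rw [Finsupp.filter_apply_pos (φ · = j) g (Finset.mem_filter.mp hx).2]

lemma intLpNorm_filter_le (f : ℤ →₀ ℂ) (p : ℤ → Prop) [DecidablePred p] (I : ℤ × ℕ)
    (hp : ∀ n, p n → n ∈ intIcc I) {r : ℝ} (hr : 0 ≤ r) :
    intLpNorm r (f.filter p) ≤ ((I.2 : ℝ) + 1) ^ (1 / r) * intAvg I r f := by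
  have hsum : ∑ n ∈ (f.filter p).support, ‖f.filter p n‖ ^ r ≤ ∑ x ∈ intIcc I, ‖f x‖ ^ r :=
    calc ∑ n ∈ (f.filter p).support, ‖f.filter p n‖ ^ r
        = ∑ n ∈ (f.filter p).support, ‖f n‖ ^ r :=
          Finset.sum_congr rfl fun n hn => by
            rw [Finsupp.filter_apply_pos _ _ (Finset.mem_filter.mp hn).2]
      _ ≤ ∑ x ∈ intIcc I, ‖f x‖ ^ r :=
          Finset.sum_le_sum_of_subset_of_nonneg (fun n hn => hp n (Finset.mem_filter.mp hn).2)
            fun _ _ _ => by positivity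
  have hI : (0 : ℝ) < I.2 + 1 := by positivity
  calc intLpNorm r (f.filter p) ≤ (∑ x ∈ intIcc I, ‖f x‖ ^ r) ^ (1 / r) :=
        Real.rpow_le_rpow (by positivity) hsum (by positivity)
    _ = ((I.2 : ℝ) + 1) ^ (1 / r) * intAvg I r f := by
        rw [intAvg, ← Real.mul_rpow hI.le (by positivity), mul_inv_cancel_left₀ hI.ne']

lemma norm_convPairing_filter_le {K : ℤ → ℂ} {r s A : ℝ} (hr : 0 ≤ r) (hs : 0 ≤ s) (hA : 0 ≤ A)
    (hT : ∀ f g, ‖convPairing K f g‖ ≤ A * intLpNorm r f * intLpNorm s g)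
    (f g : ℤ →₀ ℂ) (p q : ℤ → Prop) [DecidablePred p] [DecidablePred q] (I : ℤ × ℕ)
    (hp : ∀ n, p n → n ∈ intIcc I) (hq : ∀ x, q x → x ∈ intIcc I) :
    ‖convPairing K (f.filter p) (g.filter q)‖
      ≤ A * ((I.2 : ℝ) + 1) ^ (1 / r + 1 / s) * (intAvg I r f * intAvg I s g) := by
  have hI : (0 : ℝ) < I.2 + 1 := by positivity
  calc ‖convPairing K (f.filter p) (g.filter q)‖
      ≤ A * intLpNorm r (f.filter p) * intLpNorm s (g.filter q) := hT _ _
    _ ≤ A * (((I.2 : ℝ) + 1) ^ (1 / r) * intAvg I r f) * (((I.2 : ℝ) + 1) ^ (1 / s) * intAvg I s g) := by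
        have := intLpNorm_nonneg s (g.filter q)
        have := intAvg_nonneg I r f
        gcongr
        · exact intLpNorm_filter_le f p I hp hr
        · exact intLpNorm_filter_le g q I hq hs
    _ = A * ((I.2 : ℝ) + 1) ^ (1 / r + 1 / s) * (intAvg I r f * intAvg I s g) := by
        rw [Real.rpow_add hI]
        ring

lemma rpow_mul_le_mul_rpow {c x e : ℝ} (hc : 1 ≤ c) (hx : 0 ≤ x) (he : e ≤ 1) :
    (c * x) ^ e ≤ c * x ^ e := by
  rw [Real.mul_rpow (by linarith) hx]
  gcongr
  simpa using Real.rpow_le_rpow_of_exponent_le hc he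

/-- `tripleBlock N j` encodes `3Q_j = [jN - N, jN + 2N)`, the block `Q_j = [jN, jN + N)` together
with its two neighbours; `middleThird` recovers `Q_j` from it. -/
def tripleBlock (N : ℕ) (j : ℤ) : ℤ × ℕ := (j * N - N, 3 * N - 1)

noncomputable def middleThird (N : ℕ) (p : ℤ × ℕ) : Finset ℤ := Finset.Ico (p.1 + N) (p.1 + 2 * N)

section TripleBlock

variable {N : ℕ}

lemma tripleBlock_injective (hN : 0 < N) : Function.Injective (tripleBlock N) := by
  intro j k h
  have h1 : j * N - N = k * N - N := congrArg Prod.fst h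
  exact mul_right_cancel₀ (by positivity : (N : ℤ) ≠ 0) (by linarith)

lemma card_tripleBlock (hN : 0 < N) (j : ℤ) : ((tripleBlock N j).2 : ℝ) + 1 = 3 * N := by
  simp [tripleBlock, Nat.cast_sub (by omega : 1 ≤ 3 * N)]

lemma mem_intIcc_tripleBlock (hN : 0 < N) {j x : ℤ} :
    x ∈ intIcc (tripleBlock N j) ↔ j * N - N ≤ x ∧ x < j * N + 2 * N := by
  simp only [intIcc, tripleBlock, Finset.mem_Icc, Nat.cast_sub (by omega : 1 ≤ 3 * N)]
  push_cast
  constructor <;> rintro ⟨h1, h2⟩ <;> constructor <;> linarith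

lemma mem_middleThird_tripleBlock (hN : 0 < N) {j x : ℤ} :
    x ∈ middleThird N (tripleBlock N j) ↔ x / N = j := by
  rw [Int.ediv_eq_iff_of_pos (by positivity), middleThird, tripleBlock, Finset.mem_Ico]
  constructor <;> rintro ⟨h1, h2⟩ <;> constructor <;> linarith

lemma middleThird_tripleBlock_subset (hN : 0 < N) (j : ℤ) :
    middleThird N (tripleBlock N j) ⊆ intIcc (tripleBlock N j) := by
  intro x hx
  rw [mem_middleThird_tripleBlock hN, Int.ediv_eq_iff_of_pos (by positivity)] at hx
  rw [mem_intIcc_tripleBlock hN]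
  constructor <;> linarith

lemma isSparse_tripleBlock (hN : 0 < N) (J : Finset ℤ) :
    IsSparse (J.image (tripleBlock N)) (middleThird N) := by
  refine ⟨?_, ?_, ?_⟩
  · simp only [Finset.mem_image]
    rintro _ ⟨j, -, rfl⟩
    exact middleThird_tripleBlock_subset hN j
  · simp only [Finset.mem_image]
    rintro _ ⟨j, -, rfl⟩
    rw [card_tripleBlock hN, middleThird, Int.card_Ico]
    have : ((tripleBlock N j).1 + 2 * N - ((tripleBlock N j).1 + N)).toNat = N := by omega
    rw [this]
    have : (0 : ℝ) < N := by exact_mod_cast hN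
    linarith
  · simp only [Finset.coe_image]
    rintro _ ⟨j, -, rfl⟩ _ ⟨k, -, rfl⟩ hjk
    refine Finset.disjoint_left.mpr fun x hj hk => hjk ?_
    rw [mem_middleThird_tripleBlock hN] at hj hk
    rw [← hj, ← hk]

lemma mem_intIcc_tripleBlock_of_abs_sub_le (hN : 0 < N) {j x n : ℤ} (hx : x / N = j)
    (hn : |x - n| ≤ N) : n ∈ intIcc (tripleBlock N j) := by
  rw [Int.ediv_eq_iff_of_pos (by positivity)] at hx
  rw [mem_intIcc_tripleBlock hN]
  have := abs_le.mp hn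
  constructor <;> linarith

lemma convPairing_eq_sum_tripleBlock (hN : 0 < N) {K : ℤ → ℂ}
    (hK : ∀ n : ℤ, K n ≠ 0 → |n| ≤ (N : ℤ)) (f g : ℤ →₀ ℂ) :
    convPairing K f g = ∑ j ∈ g.support.image (· / (N : ℤ)),
      convPairing K (f.filter (· ∈ intIcc (tripleBlock N j))) (g.filter (· / (N : ℤ) = j)) := by
  rw [convPairing_eq_sum_fiberwise K f g (· / (N : ℤ))]
  refine Finset.sum_congr rfl fun j _ => (convPairing_filter_left _ _ _ _ ?_).symm
  intro x hx n hn
  by_contra hKn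
  exact hn (mem_intIcc_tripleBlock_of_abs_sub_le hN (Finset.mem_filter.mp hx).2 (hK _ hKn))

lemma sparseForm_image_tripleBlock (hN : 0 < N) (J : Finset ℤ) (r s : ℝ) (f g : ℤ →₀ ℂ) :
    sparseForm (J.image (tripleBlock N)) r s f g
      = 3 * N * ∑ j ∈ J, intAvg (tripleBlock N j) r f * intAvg (tripleBlock N j) s g := by
  rw [sparseForm, Finset.sum_image fun j _ k _ h => tripleBlock_injective hN h, Finset.mul_sum]
  refine Finset.sum_congr rfl fun j _ => ?_
  rw [card_tripleBlock hN]
  ring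

end TripleBlock

/-- Sparse bound for a convolution operator `T_K` with kernel supported in `[-N,N]`:
`|⟨T_K f, g⟩| ≤ C · N^{1/r+1/s-1} · ‖T_K‖_{ℓ^r → ℓ^{s'}} · Λ_{𝒮,r,s}(f,g)`.
The operator norm `‖T_K‖_{ℓ^r→ℓ^{s'}}` is encoded by duality through any
constant `A` satisfying `|⟨T_K f, g⟩| ≤ A ‖f‖_r ‖g‖_s`. -/
theorem stmt_2 :
    ∃ C > (0 : ℝ), ∀ (N : ℕ), 1 ≤ N → ∀ K : ℤ → ℂ,
      (∀ n : ℤ, K n ≠ 0 → |n| ≤ (N : ℤ)) →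
      ∀ r s : ℝ, 1 ≤ r → 1 ≤ s →
      ∀ A : ℝ, 0 ≤ A →
      (∀ f g : ℤ →₀ ℂ,
        ‖∑ x ∈ g.support, (∑ n ∈ f.support, K (x - n) * f n) * (starRingEnd ℂ) (g x)‖
          ≤ A * (∑ n ∈ f.support, ‖f n‖ ^ r) ^ (1 / r) * (∑ x ∈ g.support, ‖g x‖ ^ s) ^ (1 / s)) →
      ∀ f g : ℤ →₀ ℂ,
        ∃ (𝒮 : Finset (ℤ × ℕ)) (E : ℤ × ℕ → Finset ℤ), IsSparse 𝒮 E ∧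
          ‖∑ x ∈ g.support, (∑ n ∈ f.support, K (x - n) * f n) * (starRingEnd ℂ) (g x)‖
            ≤ C * (N : ℝ) ^ (1 / r + 1 / s - 1) * A * sparseForm 𝒮 r s f g := by
  refine ⟨3, by norm_num, fun N hN1 K hK r s hr hs A hA hT f g => ?_⟩
  have hN : 0 < N := hN1
  have h3N : (0 : ℝ) < 3 * N := by positivity
  set J := g.support.image (· / (N : ℤ))
  refine ⟨J.image (tripleBlock N), middleThird N, isSparse_tripleBlock hN J, ?_⟩
  calc ‖convPairing K f g‖
      ≤ ∑ j ∈ J, A * (3 * N : ℝ) ^ (1 / r + 1 / s)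
          * (intAvg (tripleBlock N j) r f * intAvg (tripleBlock N j) s g) := by
        rw [convPairing_eq_sum_tripleBlock hN hK]
        refine norm_sum_le_of_le _ fun j _ => ?_
        rw [← card_tripleBlock hN j]
        exact norm_convPairing_filter_le (by linarith) (by linarith) hA hT _ _ _ _ _
          (fun n hn => hn) fun x hx =>
            middleThird_tripleBlock_subset hN j ((mem_middleThird_tripleBlock hN).mpr hx)
    _ = A * (3 * N : ℝ) ^ (1 / r + 1 / s - 1) * sparseForm (J.image (tripleBlock N)) r s f g := by
        rw [sparseForm_image_tripleBlock hN, ← Finset.mul_sum, Real.rpow_sub h3N, Real.rpow_one]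
        field_simp
    _ ≤ 3 * (N : ℝ) ^ (1 / r + 1 / s - 1) * A * sparseForm (J.image (tripleBlock N)) r s f g := by
        rw [mul_comm A]
        gcongr
        · exact sparseForm_nonneg _ _ _ _ _
        · refine rpow_mul_le_mul_rpow (by norm_num) (Nat.cast_nonneg N) ?_
          have : 1 / r ≤ 1 := (div_le_one (by linarith)).mpr hr
          have : 1 / s ≤ 1 := (div_le_one (by linarith)).mpr hs
          linarith
end

section
/- For the functions f_{s,B/Q} = χ_{s-1} * (Mod_{-B/Q}(f·1_{ℤ∖2S})), where χ_{s-1} is a Schwartz-type bump with rapidly decaying kernel at scale 10^{s-1} and S is an interval with |S| ≥ 10^{s/(4ε)}, one has the localized average bound ⟨f_{s,B/Q}⟩_S ≲ 2^{-100s}·{f}_S, where {f}_S = |S|^{-1}Σ_x |f(x)|/(1+dist(x,S)/|S|)³. -/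
/-!
The phase of the modulation has modulus one, so `|f_{s,B/Q}| ≤ |k| * |f 1_{ℤ∖2S}|`, and summing
over `x ∈ S` first reduces everything to the column sums `∑_{x ∈ S} |k(x - y)|` for `y ∉ 2S`.
Such a `y` lies at distance `d ≥ |S|/2` from `S`, so the decay `|k(z)| ≤ T^{999} |z|^{-1000}`
(`T = 10^{s-1}`) bounds the column sum by `(|S|/d)^{1000} (T/|S|)^{999}`. Three powers of
`|S|/d ≲ (1 + d/|S|)^{-1}` produce the weight of `{f}_S`, the other `997` are at most `2`, and
`|S| ≥ 10^{s/(4ε)} ≥ 10^{25 s}` makes `(T/|S|)^{999} ≤ 2^{-100 s}`.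
-/

/-- The dilate `2^t S` of the integer interval `S = ℤ ∩ [a,b]` (encoded as `p = (a,b)`):
the integers within distance `2^t |S| / 2` of the center `(a+b)/2`, where `|S| = b-a+1`.
In particular `dilate 1 p` is the doubled interval `2S`. -/
noncomputable def dilate (t : ℕ) (p : ℤ × ℤ) : Finset ℤ :=
  Finset.Icc
    ⌈((p.1 : ℝ) + (p.2 : ℝ)) / 2 - 2 ^ t * ((p.2 : ℝ) - (p.1 : ℝ) + 1) / 2⌉
    ⌊((p.1 : ℝ) + (p.2 : ℝ)) / 2 + 2 ^ t * ((p.2 : ℝ) - (p.1 : ℝ) + 1) / 2⌋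

/-- The distance from `x ∈ ℤ` to the interval `ℤ ∩ [a,b]`. -/
def distInt (a b x : ℤ) : ℤ := max 0 (max (a - x) (x - b))

/-- `f_{s,B/Q} = χ_{s-1} * (Mod_{-B/Q}(f·1_{ℤ∖2S}))`, built from a convolution kernel `k`. -/
noncomputable def fsLoc (k : ℤ → ℂ) (θ : ℝ) (a b : ℤ) (f : ℤ →₀ ℂ) (x : ℤ) : ℂ :=
  ∑' y : ℤ, k (x - y) *
    (Complex.exp (-(2 * (Real.pi : ℂ) * Complex.I) * (θ : ℂ) * (y : ℂ)) *
      (if y ∈ dilate 1 (a, b) then 0 else f y))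

open Finset

lemma distInt_nonneg (a b y : ℤ) : 0 ≤ distInt a b y := le_max_left _ _

lemma distInt_le_abs_sub {a b x : ℤ} (hx : x ∈ Icc a b) (y : ℤ) : distInt a b y ≤ |x - y| := by
  obtain ⟨hax, hxb⟩ := mem_Icc.mp hx
  rw [distInt]
  rcases abs_cases (x - y) with ⟨h, hs⟩ | ⟨h, hs⟩ <;> rw [h] <;> omega

lemma card_le_two_mul_distInt_of_notMem_dilate {a b y : ℤ} (hy : y ∉ dilate 1 (a, b)) :
    ((b - a + 1 : ℤ) : ℝ) ≤ 2 * (distInt a b y : ℝ) := by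
  simp only [dilate, mem_Icc, not_and_or, not_le, Int.lt_ceil, Int.floor_lt] at hy
  have hleft : a - y ≤ distInt a b y := by rw [distInt]; omega
  have hright : y - b ≤ distInt a b y := by rw [distInt]; omega
  have hleft' : ((a - y : ℤ) : ℝ) ≤ distInt a b y := by exact_mod_cast hleft
  have hright' : ((y - b : ℤ) : ℝ) ≤ distInt a b y := by exact_mod_cast hright
  push_cast at hleft' hright' ⊢
  rcases hy with h | h <;> linarith

lemma norm_fsLoc_le (k : ℤ → ℂ) (θ : ℝ) (a b : ℤ) (f : ℤ →₀ ℂ) (x : ℤ) :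
    ‖fsLoc k θ a b f x‖ ≤
      ∑ y ∈ f.support, ‖k (x - y)‖ * ‖if y ∈ dilate 1 (a, b) then 0 else f y‖ := by
  have hfin : ∀ y ∉ f.support, k (x - y) *
      (Complex.exp (-(2 * (Real.pi : ℂ) * Complex.I) * (θ : ℂ) * (y : ℂ)) *
        (if y ∈ dilate 1 (a, b) then 0 else f y)) = 0 := fun y hy => by
    simp [Finsupp.notMem_support_iff.mp hy]
  rw [fsLoc, tsum_eq_sum hfin]
  refine (norm_sum_le _ _).trans (sum_le_sum fun y _ => ?_)
  have hphase : ‖Complex.exp (-(2 * (Real.pi : ℂ) * Complex.I) * (θ : ℂ) * (y : ℂ))‖ = 1 := by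
    rw [show -(2 * (Real.pi : ℂ) * Complex.I) * (θ : ℂ) * (y : ℂ) =
        ((-(2 * Real.pi * θ * y) : ℝ) : ℂ) * Complex.I by push_cast; ring]
    exact Complex.norm_exp_ofReal_mul_I _
  rw [norm_mul, norm_mul, hphase, one_mul]

lemma sum_norm_fsLoc_le {k : ℤ → ℂ} (θ : ℝ) {a b : ℤ} (f : ℤ →₀ ℂ) (s : Finset ℤ)
    {w : ℤ → ℝ} (hw0 : ∀ y, 0 ≤ w y) (hw : ∀ y ∉ dilate 1 (a, b), ∑ x ∈ s, ‖k (x - y)‖ ≤ w y) :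
    ∑ x ∈ s, ‖fsLoc k θ a b f x‖ ≤ ∑ y ∈ f.support, w y * ‖f y‖ :=
  calc ∑ x ∈ s, ‖fsLoc k θ a b f x‖
      ≤ ∑ x ∈ s, ∑ y ∈ f.support,
          ‖k (x - y)‖ * ‖if y ∈ dilate 1 (a, b) then 0 else f y‖ :=
        sum_le_sum fun x _ => norm_fsLoc_le k θ a b f x
    _ = ∑ y ∈ f.support, (∑ x ∈ s, ‖k (x - y)‖) *
          ‖if y ∈ dilate 1 (a, b) then 0 else f y‖ := by
        rw [sum_comm]; simp only [sum_mul]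
    _ ≤ ∑ y ∈ f.support, w y * ‖f y‖ := sum_le_sum fun y _ => by
        split_ifs with hy
        · simp only [norm_zero, mul_zero]
          exact mul_nonneg (hw0 y) (norm_nonneg _)
        · exact mul_le_mul_of_nonneg_right (hw y hy) (norm_nonneg _)

lemma one_add_div_rpow_neg_le {T d r : ℝ} (hT : 0 < T) (hd : 0 < d) (hdr : d ≤ r) (m : ℕ) :
    (1 + r / T) ^ (-(m : ℝ)) ≤ (T / d) ^ m := by
  calc (1 + r / T) ^ (-(m : ℝ)) ≤ (d / T) ^ (-(m : ℝ)) :=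
        Real.rpow_le_rpow_of_nonpos (by positivity)
          (by have := div_le_div_of_nonneg_right hdr hT.le; linarith) (by simp)
    _ = (T / d) ^ m := by rw [Real.rpow_neg (by positivity), Real.rpow_natCast, ← inv_pow, inv_div]

lemma div_pow_le_of_le_two_mul {N d : ℝ} (hN : 0 < N) (hd : N ≤ 2 * d) (n : ℕ) :
    (N / d) ^ (n + 3) ≤ 27 * 2 ^ n / (1 + d / N) ^ 3 := by
  have hd0 : 0 < d := by linarith
  have htwo : N / d ≤ 2 := by rw [div_le_iff₀ hd0]; linarith
  have hthree : N / d ≤ 3 / (1 + d / N) := by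
    rw [div_le_div_iff₀ hd0 (by positivity), mul_add, mul_div_cancel₀ _ hN.ne']
    linarith
  calc (N / d) ^ (n + 3) = (N / d) ^ n * (N / d) ^ 3 := pow_add _ _ _
    _ ≤ 2 ^ n * (3 / (1 + d / N)) ^ 3 := by gcongr
    _ = 27 * 2 ^ n / (1 + d / N) ^ 3 := by rw [div_pow]; ring

lemma sum_norm_kernel_le {k : ℤ → ℂ} {T E : ℝ} {n : ℕ} (hT : 0 < T) (hE : 0 < E)
    (hk : ∀ z : ℤ, ‖k z‖ ≤ T⁻¹ * (1 + |(z : ℝ)| / T) ^ (-((n + 3 : ℕ) : ℝ)))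
    {a b y : ℤ} (hab : a ≤ b) (hscale : T ^ (n + 2) * E ≤ ((b - a + 1 : ℤ) : ℝ) ^ (n + 2))
    (hy : y ∉ dilate 1 (a, b)) :
    ∑ x ∈ Icc a b, ‖k (x - y)‖ ≤
      27 * 2 ^ n * E⁻¹ / (1 + (distInt a b y : ℝ) / ((b - a + 1 : ℤ) : ℝ)) ^ 3 := by
  set N : ℝ := ((b - a + 1 : ℤ) : ℝ)
  set d : ℝ := (distInt a b y : ℝ)
  have hN : 0 < N := Int.cast_pos.mpr (by omega)
  have hd : N ≤ 2 * d := card_le_two_mul_distInt_of_notMem_dilate hy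
  have hd0 : 0 < d := by linarith
  have hcard : ((#(Icc a b) : ℕ) : ℝ) = N := by
    rw [Int.card_Icc, ← Int.cast_natCast, Int.toNat_of_nonneg (by omega)]
    simp only [N]; ring_nf
  have hpoint : ∀ x ∈ Icc a b, ‖k (x - y)‖ ≤ T⁻¹ * (T / d) ^ (n + 3) := fun x hx => by
    have hdist : d ≤ |((x - y : ℤ) : ℝ)| := by
      rw [← Int.cast_abs]; exact Int.cast_le.mpr (distInt_le_abs_sub hx y)
    exact (hk (x - y)).trans <| mul_le_mul_of_nonneg_left
      (one_add_div_rpow_neg_le hT hd0 hdist _) (inv_nonneg.mpr hT.le)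
  have hratio : T ^ (n + 2) / N ^ (n + 2) ≤ E⁻¹ := by
    rw [div_le_iff₀ (by positivity), inv_mul_eq_div, le_div_iff₀ hE]; exact hscale
  calc ∑ x ∈ Icc a b, ‖k (x - y)‖ ≤ #(Icc a b) • (T⁻¹ * (T / d) ^ (n + 3)) :=
        sum_le_card_nsmul _ _ _ hpoint
    _ = (N / d) ^ (n + 3) * (T ^ (n + 2) / N ^ (n + 2)) := by
        rw [nsmul_eq_mul, hcard]; field_simp; ring
    _ ≤ 27 * 2 ^ n / (1 + d / N) ^ 3 * E⁻¹ := by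
        gcongr
        exact div_pow_le_of_le_two_mul hN hd n
    _ = 27 * 2 ^ n * E⁻¹ / (1 + d / N) ^ 3 := by ring

lemma ten_pow_le_of_rpow_le {ε N : ℝ} {s : ℕ} (hε : 0 < ε) (hε1 : ε ≤ 1 / 100)
    (h : (10 : ℝ) ^ ((s : ℝ) / (4 * ε)) ≤ N) : (10 : ℝ) ^ (25 * s) ≤ N := by
  have hexp : ((25 * s : ℕ) : ℝ) ≤ (s : ℝ) / (4 * ε) := by
    rw [le_div_iff₀ (by positivity)]
    push_cast
    nlinarith [mul_le_mul_of_nonneg_left hε1 (Nat.cast_nonneg (α := ℝ) s)]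
  calc (10 : ℝ) ^ (25 * s) = (10 : ℝ) ^ ((25 * s : ℕ) : ℝ) := (Real.rpow_natCast _ _).symm
    _ ≤ (10 : ℝ) ^ ((s : ℝ) / (4 * ε)) := Real.rpow_le_rpow_of_exponent_le (by norm_num) hexp
    _ ≤ N := h

lemma ten_pow_pow_mul_two_pow_le (s : ℕ) :
    ((10 : ℝ) ^ (s - 1)) ^ 999 * 2 ^ (100 * s) ≤ ((10 : ℝ) ^ (25 * s)) ^ 999 :=
  calc ((10 : ℝ) ^ (s - 1)) ^ 999 * 2 ^ (100 * s) ≤ (10 : ℝ) ^ ((s - 1) * 999) * 10 ^ (100 * s) := by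
        rw [← pow_mul]; gcongr; norm_num
    _ ≤ ((10 : ℝ) ^ (25 * s)) ^ 999 := by
        rw [← pow_add, ← pow_mul]; exact pow_le_pow_right₀ (by norm_num) (by omega)

/-- Localization estimate: if `f` is supported off `2S`, the kernel `k` decays rapidly at
scale `10^{s-1}`, and `|S| ≥ 10^{s/(4ε)}`, then `⟨f_{s,B/Q}⟩_S ≲ 2^{-100s} {f}_S`. -/
theorem stmt_16 :
    ∃ C > (0 : ℝ), ∀ (ε : ℝ), 0 < ε → ε ≤ 1 / 100 → ∀ s : ℕ, 1 ≤ s →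
      ∀ B Q : ℕ, 0 < Q → Nat.Coprime B Q → 2 ^ (s - 1) ≤ Q → Q < 2 ^ s →
      ∀ k : ℤ → ℂ,
        (∀ x : ℤ, ‖k x‖ ≤ ((10 : ℝ) ^ (s - 1))⁻¹ *
          (1 + |(x : ℝ)| / (10 : ℝ) ^ (s - 1)) ^ (-(1000 : ℝ))) →
      ∀ a b : ℤ, a ≤ b → ((10 : ℝ) ^ ((s : ℝ) / (4 * ε))) ≤ ((b - a + 1 : ℤ) : ℝ) →
      ∀ f : ℤ →₀ ℂ,
        ((b - a + 1 : ℤ) : ℝ)⁻¹ *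
            ∑ x ∈ Finset.Icc a b, ‖fsLoc k ((B : ℝ) / (Q : ℝ)) a b f x‖
          ≤ C * (2 : ℝ) ^ (-(100 * s : ℝ)) *
            (((b - a + 1 : ℤ) : ℝ)⁻¹ *
              ∑ x ∈ f.support,
                ‖f x‖ / (1 + (distInt a b x : ℝ) / ((b - a + 1 : ℤ) : ℝ)) ^ 3) := by
  refine ⟨27 * 2 ^ 997, by positivity, ?_⟩
  intro ε hε hε1 s _ B Q _ _ _ _ k hk a b hab hbig f
  set N : ℝ := ((b - a + 1 : ℤ) : ℝ)
  have hscale : ((10 : ℝ) ^ (s - 1)) ^ 999 * 2 ^ (100 * s) ≤ N ^ 999 :=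
    (ten_pow_pow_mul_two_pow_le s).trans <|
      pow_le_pow_left₀ (by positivity) (ten_pow_le_of_rpow_le hε hε1 hbig) 999
  have hcol := fun y => sum_norm_kernel_le (n := 997) (by positivity) (by positivity)
    (by norm_num at hk ⊢; exact hk) hab hscale (y := y)
  have hdecay : (2 : ℝ) ^ (-(100 * s : ℝ)) = ((2 : ℝ) ^ (100 * s))⁻¹ := by
    rw [Real.rpow_neg zero_le_two]; norm_cast
  calc N⁻¹ * ∑ x ∈ Icc a b, ‖fsLoc k ((B : ℝ) / (Q : ℝ)) a b f x‖
      ≤ N⁻¹ * ∑ y ∈ f.support, 27 * 2 ^ 997 * ((2 : ℝ) ^ (100 * s))⁻¹ /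
          (1 + (distInt a b y : ℝ) / N) ^ 3 * ‖f y‖ := by
        gcongr
        refine sum_norm_fsLoc_le _ f _ (fun y => ?_) hcol
        have : (0 : ℝ) ≤ distInt a b y := by exact_mod_cast distInt_nonneg a b y
        positivity
    _ = _ := by
        rw [hdecay, mul_sum, mul_sum, mul_sum]
        generalize (27 * 2 ^ 997 : ℝ) = C
        exact sum_congr rfl fun y _ => by ring
end
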